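/- With G as above (central extension of U by V with exp(G)=p, p odd) and ρ ∈ V^∨, λ ∈ Λ²U^∨, define the 3-cochain f_{ρ,λ} : G³ → Q/Z by f_{ρ,λ}(g₁,g₂,g₃) = (1/2)·ρ(g₁ s(ḡ₁)⁻¹)·λ(ḡ₂∧ḡ₃). Then its coboundary is df_{ρ,λ}(g₁,g₂,g₃,g₄) = -(1/4)·γ^∨(ρ)(ḡ₁∧ḡ₂)·λ(ḡ₃∧ḡ₄). -/

import Mathlib

/-!
Write `g = j(r g) · s(ḡ)`. Since `s(u₁)s(u₂) = ½γ(u₁∧u₂) · s(u₁+u₂)` and `j(V)` is central,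
`r(g₁g₂) = r(g₁) + r(g₂) + ½γ(ḡ₁∧ḡ₂)`: the map `ρ ∘ r` is a homomorphism up to the
2-cochain `½ γ^∨(ρ)`. The cochain `f` is the cup product of `ρ ∘ r` with the cocycle `½λ`, so
in `df` only the defect of `ρ ∘ r` survives, giving `−½ · ½ γ^∨(ρ)(ḡ₁∧ḡ₂) · λ(ḡ₃∧ḡ₄)`.
-/

/-- The group `ℚ/ℤ`. -/
abbrev QZ : Type := AddCircle (1 : ℚ)

/-- The embedding `𝔽_p = (1/p)ℤ/ℤ ⊆ ℚ/ℤ`. -/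
noncomputable def embQZ (p : ℕ) (a : ZMod p) : QZ := ((a.val : ℚ) / p : ℚ)

noncomputable def embQZHom (p : ℕ) : ZMod p →+ QZ :=
  ZMod.lift p ⟨zmultiplesHom QZ (((p : ℚ)⁻¹ : ℚ) : QZ), by
    rcases eq_or_ne p 0 with rfl | hp
    · simp
    · rw [zmultiplesHom_apply, natCast_zsmul, ← AddCircle.coe_nsmul, nsmul_eq_mul,
        mul_inv_cancel₀ (Nat.cast_ne_zero.mpr hp)]
      exact AddCircle.coe_period (p := (1 : ℚ))⟩

lemma coe_embQZHom (p : ℕ) [NeZero p] : ⇑(embQZHom p) = embQZ p := by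
  funext a
  conv_lhs => rw [← ZMod.natCast_zmod_val a]
  rw [embQZHom, ← Int.cast_natCast (R := ZMod p), ZMod.lift_coe, zmultiplesHom_apply,
    natCast_zsmul, ← AddCircle.coe_nsmul, nsmul_eq_mul, embQZ, div_eq_mul_inv]

section CentralExtension

variable {U V G : Type*} [Add U] [Group G]
  {π : G → U} {j : V → G} {s : U → G} {c : U → U → V} {r : G → V}

lemma section_mul_section_mul_inv (hcent : ∀ (v : V) (g : G), g * j v = j v * g)
    (hsec : ∀ u₁ u₂ : U, s u₂ * (s (u₁ + u₂))⁻¹ * s u₁ = j (c u₁ u₂)) (u₁ u₂ : U) :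
    s u₁ * s u₂ * (s (u₁ + u₂))⁻¹ = j (c u₁ u₂) :=
  calc s u₁ * s u₂ * (s (u₁ + u₂))⁻¹
      = s u₁ * (s u₂ * (s (u₁ + u₂))⁻¹ * s u₁) * (s u₁)⁻¹ := by group
    _ = j (c u₁ u₂) := by rw [hsec, hcent, mul_inv_cancel_right]

lemma retraction_mul [Add V] (hπ : ∀ g₁ g₂, π (g₁ * g₂) = π g₁ + π g₂)
    (hj : ∀ v₁ v₂, j (v₁ + v₂) = j v₁ * j v₂) (hjinj : Function.Injective j)
    (hcent : ∀ (v : V) (g : G), g * j v = j v * g)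
    (hsec : ∀ u₁ u₂ : U, s u₂ * (s (u₁ + u₂))⁻¹ * s u₁ = j (c u₁ u₂))
    (hr : ∀ g : G, j (r g) = g * (s (π g))⁻¹) (g₁ g₂ : G) :
    r (g₁ * g₂) = r g₁ + r g₂ + c (π g₁) (π g₂) := by
  apply hjinj
  calc j (r (g₁ * g₂))
      = g₁ * (g₂ * (s (π g₂))⁻¹) * (s (π g₂) * (s (π g₁ + π g₂))⁻¹) := by rw [hr, hπ]; group
    _ = j (r g₂) * (g₁ * (s (π g₁))⁻¹) * (s (π g₁) * s (π g₂) * (s (π g₁ + π g₂))⁻¹) := by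
        rw [← hr g₂, hcent]; group
    _ = j (r g₁ + r g₂ + c (π g₁) (π g₂)) := by
        rw [← hr g₁, section_mul_section_mul_inv hcent hsec, hj, hj, hcent (r g₁)]

end CentralExtension

open scoped commutatorElement

theorem stmt3 (p : ℕ) [Fact p.Prime]
    (U V : Type) [AddCommGroup U] [Module (ZMod p) U]
    [AddCommGroup V] [Module (ZMod p) V]
    (G : Type) [Group G]
    (π : G → U) (hπ : ∀ g₁ g₂, π (g₁ * g₂) = π g₁ + π g₂)
    (j : V → G) (hj : ∀ v₁ v₂, j (v₁ + v₂) = j v₁ * j v₂) (hjinj : Function.Injective j)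
    (hcent : ∀ (v : V) (g : G), g * j v = j v * g)
    (γb : U →ₗ[ZMod p] U →ₗ[ZMod p] V)
    (s : U → G)
    (hsec : ∀ u₁ u₂ : U, s u₂ * (s (u₁ + u₂))⁻¹ * s u₁ = j ((2 : ZMod p)⁻¹ • γb u₁ u₂))
    (r : G → V) (hr : ∀ g : G, j (r g) = g * (s (π g))⁻¹)
    (ρ : V →ₗ[ZMod p] ZMod p)
    (lb : U →ₗ[ZMod p] U →ₗ[ZMod p] ZMod p)
    (f : G → G → G → QZ)
    (hdef : ∀ g₁ g₂ g₃ : G,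
      f g₁ g₂ g₃ = embQZ p ((2 : ZMod p)⁻¹ * ρ (r g₁) * lb (π g₂) (π g₃))) :
    ∀ g₁ g₂ g₃ g₄ : G,
      f g₂ g₃ g₄ - f (g₁ * g₂) g₃ g₄ + f g₁ (g₂ * g₃) g₄ - f g₁ g₂ (g₃ * g₄) + f g₁ g₂ g₃
        = embQZ p (-((2 : ZMod p)⁻¹ * (2 : ZMod p)⁻¹)
            * ρ (γb (π g₁) (π g₂)) * lb (π g₃) (π g₄)) := by
  intro g₁ g₂ g₃ g₄
  simp only [hdef, ← coe_embQZHom, ← map_sub, ← map_add]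
  congr 1
  rw [retraction_mul hπ hj hjinj hcent hsec hr, hπ g₂ g₃, hπ g₃ g₄]
  simp only [map_add, LinearMap.add_apply, map_smul, smul_eq_mul]
  ring
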